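/- arXiv:1911.00223 — 2 statements merged into one kernel-verified Lean document; each statement's English description precedes it below -/
import Mathlib

section
/- Let G be a finite connected simple graph with real edge weights (ties among edge weights allowed), and let T be any minimum spanning tree of G. Then every Prim order of T with seed vertex v₀ is also a Prim order of G with seed v₀. -/
open SimpleGraph

variable {V : Type*}

/-- `P` is a Prim order of the graph `H` restricted to the vertex set `S`, with seed `v₀`:
`P` maps `S` bijectively onto `{1, …, |S|}`, `P v₀ = 1`, and each vertex other than the seed
is joined to an earlier vertex by an edge of minimum weight among all edges of `H` (within `S`)
from the earlier vertices to the later ones. -/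
def IsPrimOrderOn (H : SimpleGraph V) (w : Sym2 V → ℝ)
    (S : Set V) (v₀ : V) (P : V → ℕ) : Prop :=
  v₀ ∈ S ∧ P v₀ = 1 ∧ Set.BijOn P S (Set.Icc 1 S.ncard) ∧
    ∀ v ∈ S, P v ≠ 1 →
      ∃ u ∈ S, P u < P v ∧ H.Adj u v ∧
        ∀ x ∈ S, ∀ y ∈ S, P x < P v → P v ≤ P y → H.Adj x y →
          w s(u, v) ≤ w s(x, y)

/-- Total edge weight of a graph on a finite vertex type. -/
noncomputable def totalWeight [Fintype V] (H : SimpleGraph V) (w : Sym2 V → ℝ) : ℝ :=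
  ∑ e ∈ H.edgeSet.toFinite.toFinset, w e

/-- `H` is a tree on the vertex set `S`: all its edges lie within `S`, any two vertices of `S`
are joined by a path, and `H` is acyclic. -/
def IsTreeOn (H : SimpleGraph V) (S : Set V) : Prop :=
  (∀ e ∈ H.edgeSet, ∀ v ∈ e, v ∈ S) ∧ (∀ u ∈ S, ∀ v ∈ S, H.Reachable u v) ∧ H.IsAcyclic

/-- `T` is a minimum spanning tree of `G` on the vertex set `S`. -/
def IsMSTOn [Fintype V] (G : SimpleGraph V) (w : Sym2 V → ℝ) (S : Set V)
    (T : SimpleGraph V) : Prop :=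
  T ≤ G ∧ IsTreeOn T S ∧
    ∀ T' : SimpleGraph V, T' ≤ G → IsTreeOn T' S → totalWeight T w ≤ totalWeight T' w

/-- Restriction of a graph to the edges with both endpoints in `S`. -/
def restrictTo (H : SimpleGraph V) (S : Set V) : SimpleGraph V where
  Adj a b := H.Adj a b ∧ a ∈ S ∧ b ∈ S
  symm := ⟨fun a b ⟨h, ha, hb⟩ => ⟨h.symm, hb, ha⟩⟩
  loopless := ⟨fun a ⟨h, _, _⟩ => H.loopless.irrefl a h⟩

/-- Prim order of an edge: the larger of the Prim orders of its endpoints. -/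
def edgeOrder (P : V → ℕ) : Sym2 V → ℕ :=
  Sym2.lift ⟨fun u v => max (P u) (P v), fun u v => max_comm _ _⟩

/-!
Cycle property of minimum spanning trees: if `ab` is an edge on the `T`-path joining the ends of
an edge `xy` of `G`, then `w(ab) ≤ w(xy)`, since otherwise exchanging `ab` for `xy` yields a
lighter spanning tree. Now let `u` be the vertex through which the Prim order of `T` attaches `v`,
and let `xy` be an edge of `G` with `P x < P v ≤ P y`. The `T`-path from `x` to `y` crosses from
`{z | P z < P v}` to its complement along some edge `ab` of `T`, so by Prim's rule in `T` and the
cycle property `w(uv) ≤ w(ab) ≤ w(xy)`.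
-/

namespace SimpleGraph

variable {G H T : SimpleGraph V}

theorem reachable_le_of_adj_le_reachable (h : G.Adj ≤ H.Reachable) : G.Reachable ≤ H.Reachable := by
  rw [reachable_eq_reflTransGen, reachable_eq_reflTransGen] at *
  exact Relation.reflTransGen_closed h

theorem Walk.IsPath.exists_boundary_edge {S : Set V} {x y : V} {p : G.Walk x y} (hp : p.IsPath)
    (hx : x ∈ S) (hy : y ∉ S) :
    ∃ a ∈ S, ∃ b ∉ S, G.Adj a b ∧ (G.deleteEdges {s(a, b)}).Reachable x a ∧
      (G.deleteEdges {s(a, b)}).Reachable b y := by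
  induction p with
  | nil => exact absurd hx hy
  | @cons x z y hxz q ih =>
    by_cases hz : z ∈ S
    · obtain ⟨a, ha, b, hb, hab, hza, hby⟩ := ih hp.of_cons hz hy
      have hne : s(x, z) ≠ s(a, b) := by
        rintro h
        rcases Sym2.eq_iff.mp h with ⟨-, rfl⟩ | ⟨rfl, -⟩ <;> contradiction
      have hxz' : (G.deleteEdges {s(a, b)}).Adj x z := by simpa [hne] using hxz
      exact ⟨a, ha, b, hb, hab, hxz'.reachable.trans hza, hby⟩
    · refine ⟨x, hx, z, hz, hxz, .rfl, ⟨q.toDeleteEdges _ fun e he h => ?_⟩⟩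
      rw [Set.mem_singleton_iff] at h
      subst h
      exact (List.nodup_cons.mp (Walk.edges_cons hxz q ▸ hp.edges_nodup)).1 he

theorem IsAcyclic.not_reachable_deleteEdges (hT : T.IsAcyclic) {a b x y : V} (hab : T.Adj a b)
    (hxa : (T.deleteEdges {s(a, b)}).Reachable x a)
    (hby : (T.deleteEdges {s(a, b)}).Reachable b y) :
    ¬ (T.deleteEdges {s(a, b)}).Reachable x y := fun hxy =>
  isBridge_iff.mp (isAcyclic_iff_forall_adj_isBridge.mp hT hab) (hxa.symm.trans (hxy.trans hby.symm))

end SimpleGraph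

theorem IsTreeOn.deleteEdges_sup_edge {T : SimpleGraph V} (hT : IsTreeOn T Set.univ) {a b x y : V}
    (hab : T.Adj a b) (hxa : (T.deleteEdges {s(a, b)}).Reachable x a)
    (hby : (T.deleteEdges {s(a, b)}).Reachable b y) :
    IsTreeOn (T.deleteEdges {s(a, b)} ⊔ edge x y) Set.univ := by
  set T' := T.deleteEdges {s(a, b)} ⊔ edge x y
  have hsep := hT.2.2.not_reachable_deleteEdges hab hxa hby
  have hxy : T'.Adj x y := Or.inr ((edge_adj ..).mpr ⟨Or.inl ⟨rfl, rfl⟩, fun h => hsep (h ▸ .rfl)⟩)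
  have hab' : T'.Reachable a b :=
    (hxa.symm.mono le_sup_left).trans (hxy.reachable.trans (hby.symm.mono le_sup_left))
  have hTT' : T.Adj ≤ T'.Reachable := fun u v huv => by
    by_cases he : s(u, v) = s(a, b)
    · rcases Sym2.eq_iff.mp he with ⟨rfl, rfl⟩ | ⟨rfl, rfl⟩
      exacts [hab', hab'.symm]
    · exact Adj.reachable (show T'.Adj u v from Or.inl (by simpa [he] using huv))
  refine ⟨fun _ _ _ _ => trivial, fun u _ v _ => reachable_le_of_adj_le_reachable hTT' u v
    (hT.2.1 u trivial v trivial), ?_⟩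
  exact (hT.2.2.anti (deleteEdges_le _)).sup_edge_of_not_reachable hsep

theorem totalWeight_deleteEdges_sup_edge [Fintype V] {T : SimpleGraph V} (w : Sym2 V → ℝ)
    {a b x y : V} (hab : T.Adj a b) (hxy : ¬ T.Adj x y) (hne : x ≠ y) :
    totalWeight (T.deleteEdges {s(a, b)} ⊔ edge x y) w = totalWeight T w - w s(a, b) + w s(x, y) := by
  classical
  have hedges : (T.deleteEdges {s(a, b)} ⊔ edge x y).edgeSet.toFinite.toFinset =
      insert s(x, y) (T.edgeSet.toFinite.toFinset.erase s(a, b)) := by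
    ext e
    simp only [Set.Finite.mem_toFinset, Finset.mem_insert, Finset.mem_erase, edgeSet_sup,
      edgeSet_deleteEdges, edgeSet_edge_of_ne hne, Set.mem_union, Set.mem_sdiff,
      Set.mem_singleton_iff]
    tauto
  have hxy' : s(x, y) ∉ T.edgeSet.toFinite.toFinset.erase s(a, b) := by
    simpa using fun _ _ => hxy
  have hab' : s(a, b) ∈ T.edgeSet.toFinite.toFinset := by simpa using hab
  unfold totalWeight
  rw [hedges, Finset.sum_insert hxy', ← Finset.add_sum_erase _ _ hab']
  ring

theorem IsMSTOn.weight_le_of_reachable_deleteEdges [Fintype V] {G T : SimpleGraph V}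
    {w : Sym2 V → ℝ} (hT : IsMSTOn G w Set.univ T) {a b x y : V} (hab : T.Adj a b)
    (hxa : (T.deleteEdges {s(a, b)}).Reachable x a)
    (hby : (T.deleteEdges {s(a, b)}).Reachable b y) (hxy : G.Adj x y) :
    w s(a, b) ≤ w s(x, y) := by
  obtain ⟨hTG, hTtree, hTmin⟩ := hT
  by_contra! hlt
  have hsep := hTtree.2.2.not_reachable_deleteEdges hab hxa hby
  have hxyT : ¬ T.Adj x y := fun h => by
    by_cases he : s(x, y) = s(a, b)
    · exact hlt.ne (congrArg w he)
    · exact hsep (Adj.reachable (by simpa [he] using h))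
  have hT'G : T.deleteEdges {s(a, b)} ⊔ edge x y ≤ G :=
    sup_le ((deleteEdges_le _).trans hTG) ((edge_le_iff G).mpr (.inr hxy))
  have hmin := hTmin _ hT'G (hTtree.deleteEdges_sup_edge hab hxa hby)
  rw [totalWeight_deleteEdges_sup_edge w hab hxyT hxy.ne] at hmin
  linarith

theorem prim_order_of_mst_is_prim_order_of_graph_general {V : Type*} [Fintype V] (G T : SimpleGraph V) (w : Sym2 V → ℝ)
    (hT : IsMSTOn G w Set.univ T)
    (v₀ : V) (P : V → ℕ) (hP : IsPrimOrderOn T w Set.univ v₀ P) :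
    IsPrimOrderOn G w Set.univ v₀ P := by
  obtain ⟨-, hPv₀, hPbij, hPmin⟩ := hP
  refine ⟨trivial, hPv₀, hPbij, fun v _ hv => ?_⟩
  obtain ⟨u, -, huv, hadj, hmin⟩ := hPmin v trivial hv
  refine ⟨u, trivial, huv, hT.1 hadj, fun x _ y _ hx hy hxy => ?_⟩
  obtain ⟨p, hp⟩ := (hT.2.1.2.1 x trivial y trivial).exists_isPath
  obtain ⟨a, ha, b, hb, hab, hxa, hby⟩ :=
    hp.exists_boundary_edge (S := {z | P z < P v}) hx (not_lt.mpr hy)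
  calc w s(u, v) ≤ w s(a, b) := hmin a trivial b trivial ha (not_lt.mp hb) hab
    _ ≤ w s(x, y) := hT.weight_le_of_reachable_deleteEdges hab hxa hby hxy

theorem prim_order_of_mst_is_prim_order_of_graph {V : Type*} [Fintype V] (G T : SimpleGraph V) (w : Sym2 V → ℝ)
    (hconn : G.Connected) (hT : IsMSTOn G w Set.univ T)
    (v₀ : V) (P : V → ℕ) (hP : IsPrimOrderOn T w Set.univ v₀ P) :
    IsPrimOrderOn G w Set.univ v₀ P :=
  prim_order_of_mst_is_prim_order_of_graph_general G T w hT v₀ P hP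
end

section
/- Let T be a finite tree on vertex set V with real edge weights, let P be a Prim order of T with seed vertex v₀, let E_max be the set of edges of T whose weight equals the maximum edge weight in T, and let e_max be the element of E_max with the largest Prim order P(e_max); let T_L be the connected component of T − e_max containing the seed v₀. Then every edge e ∈ E_max with e ≠ e_max is an edge of T_L. -/
open SimpleGraph

variable {V : Type*}

/-!
In a Prim order every vertex is reached from the seed through strictly earlier vertices.
Write `e_max = s(u, v)` with `P u < P v`. Since `T` is acyclic, `u` is the only neighbour of `v`
preceding it: another one would be joined to `u` through earlier vertices, avoiding `e_max`,
and `e_max` would not be a bridge. Hence every other edge `e` with `P(e) ≤ P(e_max) = P v` has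
both endpoints before `v`, and these are joined to the seed avoiding `e_max`. The tied longest edges
satisfy `P(e) ≤ P(e_max)` by the choice of `e_max`.
-/

variable {H : SimpleGraph V} {S : Set V} {w : Sym2 V → ℝ} {v₀ : V} {P : V → ℕ}

lemma restrictTo_le_deleteEdges {u v : V} (hv : v ∉ S) :
    restrictTo H S ≤ H.deleteEdges {s(u, v)} := by
  rintro a b ⟨hab, ha, hb⟩
  refine deleteEdges_adj.2 ⟨hab, fun h => ?_⟩
  rcases Sym2.mem_iff.1 ((Set.mem_singleton_iff.1 h) ▸ Sym2.mem_mk_right u v) with rfl | rfl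
  · exact hv ha
  · exact hv hb

lemma IsPrimOrderOn.reachable_restrictTo (hP : IsPrimOrderOn H w S v₀ P) {k : ℕ} {x : V}
    (hx : x ∈ S) (hxk : P x < k) : (restrictTo H {y ∈ S | P y < k}).Reachable v₀ x := by
  obtain ⟨hv₀, hP₁, hbij, hstep⟩ := hP
  induction hn : P x using Nat.strong_induction_on generalizing x with
  | _ n ih =>
    by_cases h₁ : P x = 1
    · rw [hbij.injOn hv₀ hx (hP₁.trans h₁.symm)]
    · obtain ⟨u, hu, hux, hadj, -⟩ := hstep x hx h₁
      exact (ih (P u) (hn ▸ hux) hu (hux.trans hxk) rfl).trans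
        (Adj.reachable ⟨hadj, ⟨hu, hux.trans hxk⟩, ⟨hx, hxk⟩⟩)

lemma IsPrimOrderOn.reachable_deleteEdges_of_lt (hP : IsPrimOrderOn H w S v₀ P) {u v x : V}
    (hx : x ∈ S) (hxv : P x < P v) : (H.deleteEdges {s(u, v)}).Reachable v₀ x :=
  (hP.reachable_restrictTo hx hxv).mono (restrictTo_le_deleteEdges fun h => lt_irrefl _ h.2)

lemma IsPrimOrderOn.eq_of_adj_of_lt (hP : IsPrimOrderOn H w S v₀ P) (hH : H.IsAcyclic)
    {u v x : V} (hu : u ∈ S) (hx : x ∈ S) (huv : H.Adj u v) (hxv : H.Adj x v)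
    (hu_lt : P u < P v) (hx_lt : P x < P v) : x = u := by
  by_contra hxu
  have hux : (H.deleteEdges {s(u, v)}).Reachable u x :=
    (hP.reachable_deleteEdges_of_lt hu hu_lt).symm.trans (hP.reachable_deleteEdges_of_lt hx hx_lt)
  have hxv' : (H.deleteEdges {s(u, v)}).Adj x v := by
    refine deleteEdges_adj.2 ⟨hxv, fun h => hxu ?_⟩
    simpa [hxv.ne] using Set.mem_singleton_iff.1 h
  exact isBridge_iff.1 (isAcyclic_iff_forall_adj_isBridge.1 hH huv) (hux.trans hxv'.reachable)

lemma IsPrimOrderOn.injective (hP : IsPrimOrderOn H w Set.univ v₀ P) : Function.Injective P :=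
  Set.injOn_univ.1 hP.2.2.1.injOn

lemma IsPrimOrderOn.lt_of_adj_of_max_le (hP : IsPrimOrderOn H w Set.univ v₀ P)
    (hH : H.IsAcyclic) {u v a b : V} (huv : H.Adj u v) (hlt : P u < P v) (hab : H.Adj a b)
    (hne : s(a, b) ≠ s(u, v)) (hord : max (P a) (P b) ≤ P v) : P a < P v := by
  refine (le_max_left _ _ |>.trans hord).lt_of_ne fun hav => ?_
  obtain rfl := hP.injective hav
  have hb : P b < P a := (le_max_right _ _ |>.trans hord).lt_of_ne (hP.injective.ne hab.ne.symm)
  obtain rfl := hP.eq_of_adj_of_lt hH trivial trivial huv hab.symm hlt hb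
  exact hne Sym2.eq_swap

lemma IsPrimOrderOn.lt_of_mem_of_edgeOrder_le (hP : IsPrimOrderOn H w Set.univ v₀ P)
    (hH : H.IsAcyclic) {u v : V} (huv : H.Adj u v) (hlt : P u < P v) {e : Sym2 V}
    (he : e ∈ H.edgeSet) (hne : e ≠ s(u, v)) (hord : edgeOrder P e ≤ P v) :
    ∀ x ∈ e, P x < P v := by
  induction e using Sym2.ind with
  | _ a b =>
    intro x hx
    rcases Sym2.mem_iff.1 hx with rfl | rfl
    · exact hP.lt_of_adj_of_max_le hH huv hlt he hne hord
    · exact hP.lt_of_adj_of_max_le hH huv hlt he.symm (Sym2.eq_swap ▸ hne)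
        (max_comm (P a) (P x) ▸ hord)

theorem tied_longest_edges_lie_in_left_subtree_general {V : Type*} (T : SimpleGraph V) (w : Sym2 V → ℝ)
    (hT : IsTreeOn T Set.univ)
    (v₀ : V) (P : V → ℕ) (hP : IsPrimOrderOn T w Set.univ v₀ P)
    (vi vj : V) (hmem : s(vi, vj) ∈ T.edgeSet)
    (hlargest : ∀ e ∈ T.edgeSet, w e = w s(vi, vj) → edgeOrder P e ≤ edgeOrder P s(vi, vj)) :
    ∀ e ∈ T.edgeSet, w e = w s(vi, vj) → e ≠ s(vi, vj) →
      e ∈ (T.deleteEdges {s(vi, vj)}).edgeSet ∧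
      ∀ v ∈ e, v ∈ ((T.deleteEdges {s(vi, vj)}).connectedComponentMk v₀).supp := by
  obtain ⟨u, v, huv, hlt⟩ : ∃ u v, s(u, v) = s(vi, vj) ∧ P u < P v := by
    rcases (hP.injective.ne (T.mem_edgeSet.1 hmem).ne).lt_or_gt with h | h
    · exact ⟨vi, vj, rfl, h⟩
    · exact ⟨vj, vi, Sym2.eq_swap, h⟩
  rw [← huv] at hmem hlargest ⊢
  have hord : edgeOrder P s(u, v) = P v := max_eq_right hlt.le
  intro e he hw hne
  have hlt_e := hP.lt_of_mem_of_edgeOrder_le hT.2.2 hmem hlt he hne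
    ((hlargest e he hw).trans_eq hord)
  exact ⟨(edgeSet_deleteEdges _).symm ▸ ⟨he, hne⟩, fun x hx =>
    ConnectedComponent.sound (hP.reachable_deleteEdges_of_lt (Set.mem_univ x) (hlt_e x hx)).symm⟩

theorem tied_longest_edges_lie_in_left_subtree {V : Type*} [Fintype V] (T : SimpleGraph V) (w : Sym2 V → ℝ)
    (hT : IsTreeOn T Set.univ)
    (v₀ : V) (P : V → ℕ) (hP : IsPrimOrderOn T w Set.univ v₀ P)
    (vi vj : V) (hmem : s(vi, vj) ∈ T.edgeSet)
    (hmax : ∀ e ∈ T.edgeSet, w e ≤ w s(vi, vj))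
    (hlargest : ∀ e ∈ T.edgeSet, w e = w s(vi, vj) → edgeOrder P e ≤ edgeOrder P s(vi, vj)) :
    ∀ e ∈ T.edgeSet, w e = w s(vi, vj) → e ≠ s(vi, vj) →
      e ∈ (T.deleteEdges {s(vi, vj)}).edgeSet ∧
      ∀ v ∈ e, v ∈ ((T.deleteEdges {s(vi, vj)}).connectedComponentMk v₀).supp :=
  tied_longest_edges_lie_in_left_subtree_general T w hT v₀ P hP vi vj hmem hlargest
end
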